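/- arXiv:1501.00945 — 6 statements merged into one kernel-verified Lean document; each statement's English description precedes it below -/
import Mathlib

section
/- Under axioms (A1)–(A4), for any 0 < ε' < ε < C there exists a finite set F ⊆ G such that P_ε ⊆ P_{ε'} + F. -/
open Pointwise

/-!
Choose `0 < σ ≤ ε'` with `ε + σ < C` and a compact `K` with `P σ + K = G`. Every `x ∈ P ε` is
`p + k` with `p ∈ P σ ⊆ P ε'` and `k = x - p ∈ (P ε - P σ) ∩ K ⊆ P (ε + σ) ∩ K`, a finite set
by local finiteness.
-/

theorem Set.subset_add_sub_inter_of_add_eq_univ {G : Type*} [AddCommGroup G] {A B K : Set G}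
    (hBK : B + K = Set.univ) : A ⊆ B + ((A - B) ∩ K) := by
  intro x hx
  obtain ⟨b, hb, k, hk, rfl⟩ : x ∈ B + K := hBK ▸ Set.mem_univ x
  exact Set.add_mem_add hb ⟨⟨b + k, hx, b, hb, add_sub_cancel_left b k⟩, hk⟩

section Approximants

variable {G : Type*} [AddCommGroup G] {C : ℝ} {P : ℝ → Set G}

theorem approximant_mono (hzero : ∀ ε, 0 < ε → ε < C → (0 : G) ∈ P ε)
    (hadd : ∀ ε ε', 0 < ε → 0 < ε' → ε + ε' < C → P ε + P ε' ⊆ P (ε + ε'))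
    {σ ε : ℝ} (hσ : 0 < σ) (hσε : σ ≤ ε) (hεC : ε < C) : P σ ⊆ P ε := by
  rcases hσε.eq_or_lt with rfl | hlt
  · rfl
  calc P σ ⊆ P σ + P (ε - σ) := Set.subset_add_left _ (hzero _ (by linarith) (by linarith))
    _ ⊆ P (σ + (ε - σ)) := hadd _ _ hσ (by linarith) (by linarith)
    _ = P ε := by rw [add_sub_cancel]

theorem approximant_sub_subset (hneg : ∀ ε, 0 < ε → ε < C → P ε = -P ε)
    (hadd : ∀ ε ε', 0 < ε → 0 < ε' → ε + ε' < C → P ε + P ε' ⊆ P (ε + ε'))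
    {ε σ : ℝ} (hε : 0 < ε) (hσ : 0 < σ) (hεσ : ε + σ < C) : P ε - P σ ⊆ P (ε + σ) := by
  rw [sub_eq_add_neg, ← hneg σ hσ (by linarith)]
  exact hadd ε σ hε hσ hεσ

end Approximants

theorem stmt2_general {G : Type*} [AddCommGroup G] [TopologicalSpace G]
    (C : ℝ) (P : ℝ → Set G)
    (hA1 : ∀ ε : ℝ, 0 < ε → ε < C → (0 : G) ∈ P ε ∧ P ε = -P ε)
    (hA2 : ∀ ε : ℝ, 0 < ε → ε < C → ∀ K : Set G, IsCompact K → (P ε ∩ K).Finite)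
    (hA3 : ∀ ε ε' : ℝ, 0 < ε → 0 < ε' → ε + ε' < C → P ε + P ε' ⊆ P (ε + ε'))
    (hA4 : ∀ ε : ℝ, 0 < ε → ε < C → ∃ K : Set G, IsCompact K ∧ P ε + K = Set.univ) :
    ∀ ε' ε : ℝ, 0 < ε' → ε' < ε → ε < C →
      ∃ F : Set G, F.Finite ∧ P ε ⊆ P ε' + F := by
  intro ε' ε hε' hε'ε hεC
  obtain ⟨σ, hσ, hσε', hεσ⟩ : ∃ σ, 0 < σ ∧ σ ≤ ε' ∧ ε + σ < C :=
    ⟨min ε' ((C - ε) / 2), lt_min hε' (by linarith), min_le_left _ _,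
      by linarith [min_le_right ε' ((C - ε) / 2)]⟩
  obtain ⟨K, hK, hPK⟩ := hA4 σ hσ (by linarith)
  have hsub : P ε - P σ ⊆ P (ε + σ) :=
    approximant_sub_subset (fun δ hδ hδC => (hA1 δ hδ hδC).2) hA3 (by linarith) hσ hεσ
  have hmono : P σ ⊆ P ε' :=
    approximant_mono (fun δ hδ hδC => (hA1 δ hδ hδC).1) hA3 hσ hσε' (by linarith)
  refine ⟨(P ε - P σ) ∩ K, ?_, ?_⟩
  · exact (hA2 _ (by linarith) hεσ K hK).subset (Set.inter_subset_inter_left K hsub)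
  · exact (Set.subset_add_sub_inter_of_add_eq_univ hPK).trans (Set.add_subset_add_right hmono)

theorem stmt2 {G : Type*} [AddCommGroup G] [TopologicalSpace G] [IsTopologicalAddGroup G]
    [LocallyCompactSpace G] (C : ℝ) (hC : 0 < C) (P : ℝ → Set G)
    (hA1 : ∀ ε : ℝ, 0 < ε → ε < C → (0 : G) ∈ P ε ∧ P ε = -P ε)
    (hA2 : ∀ ε : ℝ, 0 < ε → ε < C → ∀ K : Set G, IsCompact K → (P ε ∩ K).Finite)
    (hA3 : ∀ ε ε' : ℝ, 0 < ε → 0 < ε' → ε + ε' < C → P ε + P ε' ⊆ P (ε + ε'))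
    (hA4 : ∀ ε : ℝ, 0 < ε → ε < C → ∃ K : Set G, IsCompact K ∧ P ε + K = Set.univ) :
    ∀ ε' ε : ℝ, 0 < ε' → ε' < ε → ε < C →
      ∃ F : Set G, F.Finite ∧ P ε ⊆ P ε' + F :=
  stmt2_general C P hA1 hA2 hA3 hA4
end

section
/- If ω is a translation bounded weighted Dirac comb whose support Γ is weakly uniformly discrete (i.e. sup_{x∈G} #(Γ ∩ (x+K)) ≤ N for some N), then for every t ∈ G one has ‖T_t ω − ω‖_K ≤ 2N · ‖T_t ω − ω‖_∞; consequently ω is norm-almost periodic if and only if it is sup-almost periodic. -/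
/-! A difference `T_t ω - ω` can only be nonzero at points of `Γ ∪ (Γ + t)`, so every
translate `x + K` meets its support in at most `2N` points, each carrying mass at most
`‖T_t ω - ω‖_∞`. Conversely `‖·‖_∞ ≤ ‖·‖_K` because `K` is nonempty. The two norms are
therefore comparable, and comparable functions have relatively dense sublevel sets
simultaneously. -/

open Pointwise
open scoped ENNReal

section RelativelyDense

variable {G : Type*} [AddCommGroup G] [TopologicalSpace G]

def IsRelativelyDense (S : Set G) : Prop :=
  ∃ Q : Set G, IsCompact Q ∧ S + Q = Set.univ

theorem IsRelativelyDense.mono {S T : Set G} (hS : IsRelativelyDense S) (hST : S ⊆ T) :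
    IsRelativelyDense T := by
  obtain ⟨Q, hQ, hSQ⟩ := hS
  exact ⟨Q, hQ, Set.eq_univ_of_univ_subset (hSQ ▸ Set.add_subset_add_right hST)⟩

theorem isRelativelyDense_sublevel_of_le_mul {a b : G → ℝ≥0∞} {C : ℝ≥0∞}
    (hC : C ≠ ⊤) (hba : ∀ t, b t ≤ C * a t) (ha : ∀ ε, 0 < ε → IsRelativelyDense {t | a t < ε})
    (ε : ℝ≥0∞) (hε : 0 < ε) : IsRelativelyDense {t | b t < ε} := by
  refine (ha (ε / C) (ENNReal.div_pos_iff.mpr ⟨hε.ne', hC⟩)).mono fun t ht => ?_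
  calc b t ≤ C * a t := hba t
    _ = a t * C := mul_comm _ _
    _ < ε := ENNReal.mul_lt_of_lt_div ht

end RelativelyDense

theorem tsum_subtype_le_card_mul_iSup {α : Type*} (f : α → ℝ≥0∞) {S : Set α}
    {F : Finset α} (hF : Function.support f ∩ S ⊆ F) : ∑' y : S, f y ≤ F.card * ⨆ z, f z := by
  have hvanish : ∀ y ∉ F, S.indicator f y = 0 := fun y hy => by
    by_cases hyS : y ∈ S
    · rw [Set.indicator_of_mem hyS]
      by_contra hfy
      exact hy (hF ⟨hfy, hyS⟩)
    · exact Set.indicator_of_notMem hyS f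
  calc ∑' y : S, f y = ∑ y ∈ F, S.indicator f y := by rw [tsum_subtype, tsum_eq_sum hvanish]
    _ ≤ ∑ y ∈ F, ⨆ z, f z :=
      Finset.sum_le_sum fun y _ => (Set.indicator_le_self S f y).trans (le_iSup f y)
    _ = F.card * ⨆ z, f z := by rw [Finset.sum_const, nsmul_eq_mul]

theorem iSup_le_iSup_tsum_translate {G : Type*} [AddCommGroup G] {K : Set G}
    (hK : K.Nonempty) (f : G → ℝ≥0∞) : ⨆ x, f x ≤ ⨆ x, ∑' y : ((fun k => x + k) '' K : Set G), f y := by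
  obtain ⟨k, hk⟩ := hK
  refine iSup_le fun x => ?_
  have hx : x ∈ ((fun k' => x - k + k') '' K : Set G) := ⟨k, hk, sub_add_cancel x k⟩
  exact (ENNReal.le_tsum (⟨x, hx⟩ : ((fun k' => x - k + k') '' K : Set G))).trans
    (le_iSup (fun z => ∑' y : ((fun k => z + k) '' K : Set G), f y) (x - k))

theorem exists_finset_support_sub_translate {G M : Type*} [AddCommGroup G] [AddGroup M]
    {K : Set G} {w : G → M} {N : ℕ}
    (hw : ∀ x : G, ∃ F : Finset G,
      Function.support w ∩ ((fun k => x + k) '' K) ⊆ F ∧ F.card ≤ N)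
    (t x : G) : ∃ F : Finset G,
      Function.support (fun y => w (y - t) - w y) ∩ ((fun k => x + k) '' K) ⊆ F ∧
        F.card ≤ 2 * N := by
  classical
  obtain ⟨F₁, hF₁, hF₁N⟩ := hw x
  obtain ⟨F₂, hF₂, hF₂N⟩ := hw (x - t)
  refine ⟨F₁ ∪ F₂.image (· + t), ?_, ?_⟩
  · rintro y ⟨hy, k, hk, rfl⟩
    by_cases hwy : w (x + k) = 0
    · have hwyt : w (x + k - t) ≠ 0 := fun h => hy (by simp [h, hwy])
      have hmem : x + k - t ∈ F₂ := hF₂ ⟨hwyt, k, hk, (add_sub_right_comm x k t).symm⟩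
      exact Finset.mem_union_right _
        (Finset.mem_image.mpr ⟨x + k - t, hmem, sub_add_cancel _ _⟩)
    · exact Finset.mem_union_left _ (hF₁ ⟨hwy, k, hk, rfl⟩)
  · calc (F₁ ∪ F₂.image (· + t)).card ≤ F₁.card + F₂.card :=
          (Finset.card_union_le _ _).trans (Nat.add_le_add_left Finset.card_image_le _)
      _ ≤ 2 * N := by omega

theorem stmt6_general {G : Type*} [AddCommGroup G] [TopologicalSpace G]
    (K : Set G) (hKint : (interior K).Nonempty)
    (w : G → ℂ) (N : ℕ)
    (hwud : ∀ x : G, ∃ F : Finset G,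
      {g : G | w g ≠ 0} ∩ ((fun k => x + k) '' K) ⊆ ↑F ∧ F.card ≤ N)
    (normK normI : G → ℝ≥0∞)
    (hnormK : ∀ t : G, normK t =
      ⨆ x : G, ∑' y : ((fun k => x + k) '' K : Set G), (‖w ((y : G) - t) - w (y : G)‖₊ : ℝ≥0∞))
    (hnormI : ∀ t : G, normI t = ⨆ x : G, (‖w (x - t) - w x‖₊ : ℝ≥0∞)) :
    (∀ t : G, normK t ≤ 2 * N * normI t) ∧
    ((∀ ε : ℝ≥0∞, 0 < ε → ∃ Q : Set G, IsCompact Q ∧ {t : G | normK t < ε} + Q = Set.univ) ↔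
     (∀ ε : ℝ≥0∞, 0 < ε → ∃ Q : Set G, IsCompact Q ∧ {t : G | normI t < ε} + Q = Set.univ)) := by
  have hKI : ∀ t, normK t ≤ 2 * N * normI t := fun t => by
    rw [hnormK, hnormI]
    refine iSup_le fun x => ?_
    obtain ⟨F, hF, hFN⟩ := exists_finset_support_sub_translate hwud t x
    refine (tsum_subtype_le_card_mul_iSup (fun y => (‖w (y - t) - w y‖₊ : ℝ≥0∞))
      fun y hy => hF ⟨fun h => hy.1 ?_, hy.2⟩).trans ?_
    · simp [h]
    · gcongr
      exact_mod_cast hFN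
  have hIK : ∀ t, normI t ≤ 1 * normK t := fun t => by
    rw [one_mul, hnormI, hnormK]
    exact iSup_le_iSup_tsum_translate (hKint.mono interior_subset) _
  exact ⟨hKI, isRelativelyDense_sublevel_of_le_mul ENNReal.one_ne_top hIK,
    isRelativelyDense_sublevel_of_le_mul (by simp [ENNReal.mul_eq_top]) hKI⟩

theorem stmt6 {G : Type*} [AddCommGroup G] [TopologicalSpace G] [IsTopologicalAddGroup G]
    [LocallyCompactSpace G]
    (K : Set G) (hK : IsCompact K) (hKint : (interior K).Nonempty)
    (w : G → ℂ) (N : ℕ)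
    (hwud : ∀ x : G, ∃ F : Finset G,
      {g : G | w g ≠ 0} ∩ ((fun k => x + k) '' K) ⊆ ↑F ∧ F.card ≤ N)
    (htb : (⨆ x : G, ∑' y : ((fun k => x + k) '' K : Set G), (‖w (y : G)‖₊ : ℝ≥0∞)) < ⊤)
    (normK normI : G → ℝ≥0∞)
    (hnormK : ∀ t : G, normK t =
      ⨆ x : G, ∑' y : ((fun k => x + k) '' K : Set G), (‖w ((y : G) - t) - w (y : G)‖₊ : ℝ≥0∞))
    (hnormI : ∀ t : G, normI t = ⨆ x : G, (‖w (x - t) - w x‖₊ : ℝ≥0∞)) :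
    (∀ t : G, normK t ≤ 2 * N * normI t) ∧
    ((∀ ε : ℝ≥0∞, 0 < ε → ∃ Q : Set G, IsCompact Q ∧ {t : G | normK t < ε} + Q = Set.univ) ↔
     (∀ ε : ℝ≥0∞, 0 < ε → ∃ Q : Set G, IsCompact Q ∧ {t : G | normI t < ε} + Q = Set.univ)) :=
  stmt6_general K hKint w N hwud normK normI hnormK hnormI
end

section
/- Let Γ ⊆ G be weakly uniformly discrete, 0 < ε < 1, and t ∈ G. Then ‖T_t δ_Γ − δ_Γ‖_∞ ≤ ε if and only if t + Γ = Γ. -/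
theorem abs_indicator_one_sub_indicator_one_le_iff {α : Type*} {A B : Set α} {a b : α} {ε : ℝ}
    (hε0 : 0 ≤ ε) (hε1 : ε < 1) :
    |A.indicator (fun _ => (1 : ℝ)) a - B.indicator (fun _ => (1 : ℝ)) b| ≤ ε ↔
      (a ∈ A ↔ b ∈ B) := by
  by_cases ha : a ∈ A <;> by_cases hb : b ∈ B <;> simp [ha, hb, hε0, hε1.not_ge]

theorem image_add_left_eq_self_iff {G : Type*} [AddCommGroup G] (t : G) (Γ : Set G) :
    (fun g => t + g) '' Γ = Γ ↔ ∀ x, (x - t ∈ Γ ↔ x ∈ Γ) := by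
  simp only [Set.image_add_left, Set.ext_iff, Set.mem_preimage, neg_add_eq_sub]

theorem stmt7_general {G : Type*} [AddCommGroup G]
    (Γ : Set G)
    (ε : ℝ) (hε0 : 0 < ε) (hε1 : ε < 1) (t : G) :
    (∀ x : G, |Set.indicator Γ (fun _ => (1 : ℝ)) (x - t)
        - Set.indicator Γ (fun _ => (1 : ℝ)) x| ≤ ε) ↔
      (fun g => t + g) '' Γ = Γ := by
  rw [image_add_left_eq_self_iff]
  exact forall_congr' fun _ => abs_indicator_one_sub_indicator_one_le_iff hε0.le hε1

theorem stmt7 {G : Type*} [AddCommGroup G] [TopologicalSpace G] [IsTopologicalAddGroup G]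
    (Γ : Set G) (K : Set G) (hK : IsCompact K) (hKint : (interior K).Nonempty)
    (N : ℕ)
    (hwud : ∀ x : G, ∃ F : Finset G, Γ ∩ ((fun k => x + k) '' K) ⊆ ↑F ∧ F.card ≤ N)
    (ε : ℝ) (hε0 : 0 < ε) (hε1 : ε < 1) (t : G) :
    (∀ x : G, |Set.indicator Γ (fun _ => (1 : ℝ)) (x - t)
        - Set.indicator Γ (fun _ => (1 : ℝ)) x| ≤ ε) ↔
      (fun g => t + g) '' Γ = Γ :=
  stmt7_general Γ ε hε0 hε1 t
end

section
/- For any subgroup H of the unit circle U(1) with H ≠ {1}, there exists z ∈ H with |z − 1| ≥ √3. -/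
/-!
Take `x ≠ 1` in `H` and `φ = |arg x| ∈ (0, π]`, so that `(x ^ n).re = cos (n φ)`. Either
`φ ∈ [2π/3, π]` already, or the steps `φ < 2π/3` of the sequence `n φ` cannot jump over the
interval `[2π/3, 4π/3]`, on which the cosine is at most `-1/2`. On the unit circle
`‖z - 1‖² = 2 - 2 Re z`, so `Re z ≤ -1/2` means `‖z - 1‖ ≥ √3`.
-/

open Real

theorem pow_mem_of_mul_mem {M : Type*} [Monoid M] {S : Set M} (hone : 1 ∈ S)
    (hmul : ∀ z ∈ S, ∀ w ∈ S, z * w ∈ S) {z : M} (hz : z ∈ S) (n : ℕ) : z ^ n ∈ S :=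
  (Submonoid.mk ⟨S, fun ha hb => hmul _ ha _ hb⟩ hone).pow_mem hz n

theorem Complex.sq_norm_sub_one_of_norm_eq_one {z : ℂ} (hz : ‖z‖ = 1) :
    ‖z - 1‖ ^ 2 = 2 - 2 * z.re := by
  rw [← Complex.normSq_eq_norm_sq, Complex.normSq_sub, Complex.normSq_eq_norm_sq, hz]
  simp only [map_one, mul_one]
  ring

theorem Complex.sqrt_three_le_norm_sub_one {z : ℂ} (hz : ‖z‖ = 1) (hre : z.re ≤ -(1 / 2)) :
    √3 ≤ ‖z - 1‖ :=
  Real.sqrt_le_iff.mpr ⟨norm_nonneg _, by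
    rw [Complex.sq_norm_sub_one_of_norm_eq_one hz]; linarith⟩

theorem Complex.re_pow_of_norm_eq_one {z : ℂ} (hz : ‖z‖ = 1) (n : ℕ) :
    (z ^ n).re = Real.cos (n * |z.arg|) := by
  have hexp : z ^ n = Complex.exp ((n * z.arg : ℝ) * Complex.I) := by
    conv_lhs => rw [← Complex.norm_mul_exp_arg_mul_I z, hz]
    rw [Complex.ofReal_one, one_mul, ← Complex.exp_nat_mul]
    push_cast; ring_nf
  rw [hexp, Complex.exp_ofReal_mul_I_re, ← Real.cos_abs, abs_mul, Nat.abs_cast]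

theorem cos_le_neg_half_of_mem_Icc {x : ℝ} (hx : x ∈ Set.Icc (2 * π / 3) (4 * π / 3)) :
    cos x ≤ -(1 / 2) := by
  have hdist : |x - π| ≤ π / 3 := abs_le.mpr ⟨by linarith [hx.1], by linarith [hx.2]⟩
  have hcos := cos_le_cos_of_nonneg_of_le_pi (abs_nonneg _) (by linarith [pi_pos]) hdist
  rw [cos_abs, cos_sub_pi, cos_pi_div_three] at hcos
  linarith

theorem exists_nat_mul_mem_Icc_of_le_sub {a b φ : ℝ} (ha : 0 ≤ a) (hφ : 0 < φ)
    (hφab : φ ≤ b - a) : ∃ n : ℕ, n * φ ∈ Set.Icc a b := by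
  refine ⟨⌈a / φ⌉₊, ?_, ?_⟩
  · simpa [div_le_iff₀ hφ] using Nat.le_ceil (a / φ)
  · have hlt := Nat.ceil_lt_add_one (div_nonneg ha hφ.le)
    have := (mul_lt_mul_iff_of_pos_right hφ).mpr hlt
    rw [add_mul, div_mul_cancel₀ _ hφ.ne', one_mul] at this
    linarith

theorem exists_nat_mul_mem_Icc_two_pi_div_three {φ : ℝ} (hφ : 0 < φ) (hφπ : φ ≤ π) :
    ∃ n : ℕ, n * φ ∈ Set.Icc (2 * π / 3) (4 * π / 3) := by
  rcases le_or_gt (2 * π / 3) φ with hle | hlt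
  · exact ⟨1, by simpa using ⟨hle, by linarith [pi_pos]⟩⟩
  · exact exists_nat_mul_mem_Icc_of_le_sub (by positivity) hφ (by linarith)

theorem stmt8_general (H : Set ℂ) (hnorm : ∀ z ∈ H, ‖z‖ = 1) (hone : (1 : ℂ) ∈ H)
    (hmul : ∀ z ∈ H, ∀ w ∈ H, z * w ∈ H)
    (hne : H ≠ {1}) : ∃ z ∈ H, Real.sqrt 3 ≤ ‖z - 1‖ := by
  obtain ⟨x, hxH, hx1⟩ :=
    Set.exists_of_ssubset ((Set.singleton_subset_iff.2 hone).ssubset_of_ne hne.symm)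
  have hx : ‖x‖ = 1 := hnorm x hxH
  have harg : 0 < |x.arg| := by
    refine abs_pos.mpr fun h => hx1 (Complex.ext_norm_arg_iff.mpr ?_)
    simp [hx, h]
  obtain ⟨n, hn⟩ := exists_nat_mul_mem_Icc_two_pi_div_three harg (Complex.abs_arg_le_pi x)
  have hxn := pow_mem_of_mul_mem hone hmul hxH n
  refine ⟨x ^ n, hxn, Complex.sqrt_three_le_norm_sub_one (hnorm _ hxn) ?_⟩
  rw [Complex.re_pow_of_norm_eq_one hx]
  exact cos_le_neg_half_of_mem_Icc hn

theorem stmt8 (H : Set ℂ) (hnorm : ∀ z ∈ H, ‖z‖ = 1) (hone : (1 : ℂ) ∈ H)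
    (hmul : ∀ z ∈ H, ∀ w ∈ H, z * w ∈ H) (hinv : ∀ z ∈ H, z⁻¹ ∈ H)
    (hne : H ≠ {1}) : ∃ z ∈ H, Real.sqrt 3 ≤ ‖z - 1‖ :=
  stmt8_general H hnorm hone hmul hne
end

section
/- If Λ^ε is relatively dense in Ĝ for some ε > 0 and t ∈ G, then (t+Λ)^{3ε} is relatively dense in Ĝ. -/
open Pointwise

/-!
Evaluation at `t` maps `Λ^ε` into the compact circle, so finitely many `d' ∈ Λ^ε`
approximate every `d ∈ Λ^ε` at `t` to within `ε`. For such a pair, `d d'⁻¹` is within `ε`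
of `1` at `t` and within `2ε` of `1` on `Λ`, hence within `3ε` of `1` on `t + Λ`. Writing
`χ = d q` as `(d d'⁻¹)(d' q)` shows `(t + Λ)^{3ε} · (F Q) = Ĝ` for the finite set `F` of
the `d'`.
-/

/-- The ε-dual set of a subset `Λ` of `G`, inside the Pontryagin dual of `G`. -/
def epsDual {G : Type*} [AddCommGroup G] [TopologicalSpace G] [IsTopologicalAddGroup G]
    (Λ : Set G) (ε : ℝ) : Set (PontryaginDual (Multiplicative G)) :=
  {χ | ∀ x ∈ Λ, ‖(χ (Multiplicative.ofAdd x) : ℂ) - 1‖ ≤ ε}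

namespace Circle

lemma dist_eq_norm (u v : Circle) : dist u v = ‖(u : ℂ) - v‖ :=
  _root_.dist_eq_norm (u : ℂ) v

lemma dist_mul_inv_one (u v : Circle) : dist (u * v⁻¹) 1 = dist u v := by
  rw [dist_eq_norm, dist_eq_norm, coe_mul, coe_inv, coe_one,
    ← mul_inv_cancel₀ v.coe_ne_zero, ← sub_mul, norm_mul, norm_inv, norm_coe, inv_one,
    mul_one]

lemma dist_mul_mul_le (a b c d : Circle) : dist (a * b) (c * d) ≤ dist a c + dist b d := by
  simp only [dist_eq_norm, coe_mul]
  calc ‖(a : ℂ) * b - c * d‖ = ‖((a : ℂ) - c) * b + c * (b - d)‖ := by ring_nf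
    _ ≤ ‖(a : ℂ) - c‖ + ‖(b : ℂ) - d‖ := by
      grw [norm_add_le, norm_mul, norm_mul, norm_coe, norm_coe, mul_one, one_mul]

end Circle

lemma exists_finite_subset_forall_dist_lt {α X : Type*} [PseudoMetricSpace X] [CompactSpace X]
    (v : α → X) (D : Set α) {δ : ℝ} (hδ : 0 < δ) :
    ∃ F ⊆ D, F.Finite ∧ ∀ d ∈ D, ∃ d' ∈ F, dist (v d) (v d') < δ := by
  have hD : TotallyBounded (v '' D) := isCompact_univ.totallyBounded.subset (Set.subset_univ _)
  obtain ⟨F, hFD, hF, hcover⟩ :=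
    Set.exists_subset_image_finite_and.1 (Metric.finite_approx_of_totallyBounded hD δ hδ)
  refine ⟨F, hFD, hF, fun d hd => ?_⟩
  obtain ⟨_, ⟨d', hd', rfl⟩, hdd'⟩ := Set.mem_iUnion₂.1 (hcover ⟨d, hd, rfl⟩)
  exact ⟨d', hd', hdd'⟩

lemma Set.mul_mul_eq_univ_of_forall_mul_inv_mem {M : Type*} [Group M] {D Q E F : Set M}
    (hDQ : D * Q = Set.univ) (hDF : ∀ d ∈ D, ∃ f ∈ F, d * f⁻¹ ∈ E) :
    E * (F * Q) = Set.univ := by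
  refine Set.eq_univ_of_forall fun χ => ?_
  obtain ⟨d, hd, q, hq, rfl⟩ : χ ∈ D * Q := hDQ ▸ Set.mem_univ χ
  obtain ⟨f, hf, hdf⟩ := hDF d hd
  exact ⟨d * f⁻¹, hdf, f * q, Set.mul_mem_mul hf hq, by group⟩

section
variable {G : Type*} [AddCommGroup G] [TopologicalSpace G] [IsTopologicalAddGroup G]

lemma mem_epsDual_iff_dist {Λ : Set G} {ε : ℝ} {χ : PontryaginDual (Multiplicative G)} :
    χ ∈ epsDual Λ ε ↔ ∀ x ∈ Λ, dist (χ (Multiplicative.ofAdd x)) 1 ≤ ε := by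
  simp only [epsDual, Set.mem_ofPred_eq, Circle.dist_eq_norm, Circle.coe_one]

lemma mul_inv_mem_epsDual_image_add {Λ : Set G} {ε δ : ℝ}
    {d d' : PontryaginDual (Multiplicative G)}
    (hd : d ∈ epsDual Λ ε) (hd' : d' ∈ epsDual Λ ε) (t : G)
    (ht : dist (d (Multiplicative.ofAdd t)) (d' (Multiplicative.ofAdd t)) ≤ δ) :
    d * d'⁻¹ ∈ epsDual ((fun g => t + g) '' Λ) (δ + 2 * ε) := by
  rw [mem_epsDual_iff_dist] at hd hd' ⊢
  rintro _ ⟨x, hx, rfl⟩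
  have hdx : dist (d (Multiplicative.ofAdd x)) (d' (Multiplicative.ofAdd x)) ≤ 2 * ε := by
    linarith [dist_triangle_right (d (Multiplicative.ofAdd x)) (d' (Multiplicative.ofAdd x)) 1,
      hd x hx, hd' x hx]
  have happly : (d * d'⁻¹) (Multiplicative.ofAdd (t + x))
      = d (Multiplicative.ofAdd t) * d (Multiplicative.ofAdd x)
        * (d' (Multiplicative.ofAdd t) * d' (Multiplicative.ofAdd x))⁻¹ := by
    rw [← map_mul d, ← map_mul d']; rfl
  rw [happly, Circle.dist_mul_inv_one]
  exact (Circle.dist_mul_mul_le _ _ _ _).trans (add_le_add ht hdx)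

end

theorem stmt13_general {G : Type*} [AddCommGroup G] [TopologicalSpace G] [IsTopologicalAddGroup G]
    (Λ : Set G) (ε : ℝ) (hε0 : 0 < ε) (t : G)
    (hrd : ∃ Q : Set (PontryaginDual (Multiplicative G)), IsCompact Q ∧
      epsDual Λ ε * Q = Set.univ) :
    ∃ Q : Set (PontryaginDual (Multiplicative G)), IsCompact Q ∧
      epsDual ((fun g => t + g) '' Λ) (3 * ε) * Q = Set.univ := by
  obtain ⟨Q, hQ, hDQ⟩ := hrd
  obtain ⟨F, hFD, hF, hclose⟩ := exists_finite_subset_forall_dist_lt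
    (fun χ : PontryaginDual (Multiplicative G) => χ (Multiplicative.ofAdd t)) (epsDual Λ ε) hε0
  refine ⟨F * Q, hF.isCompact.mul hQ, Set.mul_mul_eq_univ_of_forall_mul_inv_mem hDQ ?_⟩
  intro d hd
  obtain ⟨d', hd'F, hdd'⟩ := hclose d hd
  refine ⟨d', hd'F, ?_⟩
  rw [show 3 * ε = ε + 2 * ε by ring]
  exact mul_inv_mem_epsDual_image_add hd (hFD hd'F) t hdd'.le

theorem stmt13 {G : Type*} [AddCommGroup G] [TopologicalSpace G] [IsTopologicalAddGroup G]
    [LocallyCompactSpace G] (Λ : Set G) (ε : ℝ) (hε0 : 0 < ε) (t : G)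
    (hrd : ∃ Q : Set (PontryaginDual (Multiplicative G)), IsCompact Q ∧
      epsDual Λ ε * Q = Set.univ) :
    ∃ Q : Set (PontryaginDual (Multiplicative G)), IsCompact Q ∧
      epsDual ((fun g => t + g) '' Λ) (3 * ε) * Q = Set.univ :=
  stmt13_general Λ ε hε0 t hrd
end

section
/- Let f: G → ℂ be positive definite with f ≥ 0 pointwise on its values (f real nonnegative), f(0) > 0, and let 0 < a, b < f(0). If f(x) ≥ a and f(y) ≥ b, then f(x ± y) ≥ b − √(2 f(0)(f(0) − a)). -/
/-!
Krein's inequality bounds the change `|f (u + v) - f u|` by `√(2 f 0 (f 0 - f v))`, uniformly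
in `u`. So a translate by a point `v` where `f v ≥ a` lowers `f` by at most `√(2 f 0 (f 0 - a))`;
apply this at `u = y` and `u = -y`, using that `f` is even.
-/

section Krein

variable {G : Type*} [Add G] [Zero G] {f : G → ℝ}

theorem abs_sub_le_sqrt_of_krein
    (hkrein : ∀ u v : G, |f (u + v) - f u| ^ 2 ≤ 2 * f 0 * (f 0 - f v)) (hf0 : 0 ≤ f 0)
    {a : ℝ} (u : G) {v : G} (hv : a ≤ f v) :
    |f (u + v) - f u| ≤ Real.sqrt (2 * f 0 * (f 0 - a)) := by
  have hsq : |f (u + v) - f u| ^ 2 ≤ 2 * f 0 * (f 0 - a) :=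
    (hkrein u v).trans (by gcongr)
  exact Real.abs_le_sqrt (sq_abs (f (u + v) - f u) ▸ hsq)

theorem sub_sqrt_le_apply_add_of_krein
    (hkrein : ∀ u v : G, |f (u + v) - f u| ^ 2 ≤ 2 * f 0 * (f 0 - f v)) (hf0 : 0 ≤ f 0)
    {a b : ℝ} {u v : G} (hu : b ≤ f u) (hv : a ≤ f v) :
    b - Real.sqrt (2 * f 0 * (f 0 - a)) ≤ f (u + v) := by
  have hdiff := (abs_le.mp (abs_sub_le_sqrt_of_krein hkrein hf0 u hv)).1
  linarith

end Krein

theorem stmt19_general {G : Type*} [AddCommGroup G] (f : G → ℝ)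
    (heven : ∀ x : G, f (-x) = f x)
    (hkrein : ∀ u v : G, |f (u + v) - f u| ^ 2 ≤ 2 * f 0 * (f 0 - f v))
    (h0 : 0 < f 0) (a b : ℝ)
    (x y : G) (hx : a ≤ f x) (hy : b ≤ f y) :
    b - Real.sqrt (2 * f 0 * (f 0 - a)) ≤ f (x + y) ∧
    b - Real.sqrt (2 * f 0 * (f 0 - a)) ≤ f (x - y) := by
  have hy' : b ≤ f (-y) := (heven y).symm ▸ hy
  constructor
  · simpa only [add_comm] using sub_sqrt_le_apply_add_of_krein hkrein h0.le hy hx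
  · simpa only [neg_add_eq_sub] using sub_sqrt_le_apply_add_of_krein hkrein h0.le hy' hx

theorem stmt19 {G : Type*} [AddCommGroup G] (f : G → ℝ)
    (hnonneg : ∀ x : G, 0 ≤ f x) (heven : ∀ x : G, f (-x) = f x)
    (hkrein : ∀ u v : G, |f (u + v) - f u| ^ 2 ≤ 2 * f 0 * (f 0 - f v))
    (h0 : 0 < f 0) (a b : ℝ) (ha0 : 0 < a) (ha : a < f 0) (hb0 : 0 < b) (hb : b < f 0)
    (x y : G) (hx : a ≤ f x) (hy : b ≤ f y) :
    b - Real.sqrt (2 * f 0 * (f 0 - a)) ≤ f (x + y) ∧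
    b - Real.sqrt (2 * f 0 * (f 0 - a)) ≤ f (x - y) :=
  stmt19_general f heven hkrein h0 a b x y hx hy
end
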